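/- Let N be a positive integer and μ, ε > 0 real. Let D₁, D₂, D₃ be pairwise commuting skew-symmetric real N×N matrices, 𝔻 := [[0, −D₃, D₂], [D₃, 0, −D₁], [−D₂, D₁, 0]] (3N×3N), 𝒟 := (1/√(με))·[[0, −𝔻], [𝔻, 0]] (6N×6N), and for k = 1, 2, 3 let B_k be the block-diagonal 3N×3N matrix with each diagonal block equal to D_k. Given H⁰, E⁰ ∈ ℝ^(3N), define (√μ·H^t, √ε·E^t) = exp(t𝒟)·(√μ·H⁰, √ε·E⁰). Then the discrete momenta are exactly conserved: for each k = 1, 2, 3 and all t ∈ ℝ, ⟨H^t, B_k E^t⟩ = ⟨H⁰, B_k E⁰⟩ and ⟨E^t, B_k H^t⟩ = ⟨E⁰, B_k H⁰⟩. -/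

import Mathlib

/-!
Writing `u = (√μ H, √ε E)`, the scheme is `u(t) = exp(t𝒟) u(0)`. The curl matrix `𝔻` is symmetric
because the `D_k` are skew, so `𝒟` is skew and `exp(t𝒟)` is orthogonal. Since the `D_k` commute,
`B_k` commutes with `𝔻`, hence `𝒟` commutes with `M_k = [[0, B_k], [-B_k, 0]]`, and so does
`exp(t𝒟)`. Therefore the quadratic form `u ⬝ M_k u = 2 √(με) ⟨H, B_k E⟩` is conserved; the second
momentum is the negative of the first because `B_k` is skew.
-/

open Matrix

/-- A `3N × 3N` block matrix built from a `3 × 3` array of `N × N` blocks. -/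
def blockMat3 {N : ℕ} {α : Type*} (A : Fin 3 → Fin 3 → Matrix (Fin N) (Fin N) α) :
    Matrix (Fin 3 × Fin N) (Fin 3 × Fin N) α :=
  Matrix.of fun p q => A p.1 q.1 p.2 q.2

/-- The `3N × 3N` block-diagonal matrix with each diagonal block equal to `D`. -/
def blockDiag3 {N : ℕ} {α : Type*} [Zero α] (D : Matrix (Fin N) (Fin N) α) :
    Matrix (Fin 3 × Fin N) (Fin 3 × Fin N) α :=
  Matrix.of fun p q => if p.1 = q.1 then D p.2 q.2 else 0

section BlockMatrices

variable {N : ℕ} {α : Type*}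

lemma blockMat3_transpose (A : Fin 3 → Fin 3 → Matrix (Fin N) (Fin N) α) :
    (blockMat3 A)ᵀ = blockMat3 fun i j => (A j i)ᵀ :=
  rfl

lemma blockDiag3_transpose [Zero α] (D : Matrix (Fin N) (Fin N) α) :
    (blockDiag3 D)ᵀ = blockDiag3 Dᵀ := by
  ext ⟨i, x⟩ ⟨j, y⟩
  simp [blockDiag3, eq_comm]

lemma blockDiag3_neg [NegZeroClass α] (D : Matrix (Fin N) (Fin N) α) :
    blockDiag3 (-D) = -blockDiag3 D := by
  ext ⟨i, x⟩ ⟨j, y⟩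
  by_cases h : i = j <;> simp [blockDiag3, h]

variable [NonUnitalNonAssocSemiring α]

lemma blockMat3_mul_blockDiag3 (A : Fin 3 → Fin 3 → Matrix (Fin N) (Fin N) α)
    (D : Matrix (Fin N) (Fin N) α) :
    blockMat3 A * blockDiag3 D = blockMat3 fun i j => A i j * D := by
  ext ⟨i, x⟩ ⟨j, y⟩
  simp [mul_apply, blockMat3, blockDiag3, Fintype.sum_prod_type]

lemma blockDiag3_mul_blockMat3 (A : Fin 3 → Fin 3 → Matrix (Fin N) (Fin N) α)
    (D : Matrix (Fin N) (Fin N) α) :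
    blockDiag3 D * blockMat3 A = blockMat3 fun i j => D * A i j := by
  ext ⟨i, x⟩ ⟨j, y⟩
  simp [mul_apply, blockMat3, blockDiag3, Fintype.sum_prod_type, ite_mul]

lemma Commute.blockMat3_blockDiag3 {A : Fin 3 → Fin 3 → Matrix (Fin N) (Fin N) α}
    {D : Matrix (Fin N) (Fin N) α} (h : ∀ i j, Commute (A i j) D) :
    Commute (blockMat3 A) (blockDiag3 D) := by
  rw [Commute, SemiconjBy, blockMat3_mul_blockDiag3, blockDiag3_mul_blockMat3]
  exact congrArg blockMat3 (funext₂ fun i j => (h i j).eq)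

end BlockMatrices

section Curl

variable {N : ℕ} {α : Type*} [Ring α]

def curlMatrix (D1 D2 D3 : Matrix (Fin N) (Fin N) α) : Matrix (Fin 3 × Fin N) (Fin 3 × Fin N) α :=
  blockMat3 ![![0, -D3, D2], ![D3, 0, -D1], ![-D2, D1, 0]]

lemma isSymm_curlMatrix {D1 D2 D3 : Matrix (Fin N) (Fin N) α}
    (hD1 : D1ᵀ = -D1) (hD2 : D2ᵀ = -D2) (hD3 : D3ᵀ = -D3) : (curlMatrix D1 D2 D3).IsSymm := by
  rw [IsSymm, curlMatrix, blockMat3_transpose]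
  refine congrArg blockMat3 (funext₂ fun i j => ?_)
  fin_cases i <;> fin_cases j <;> simp [hD1, hD2, hD3]

lemma Commute.curlMatrix_blockDiag3 {D1 D2 D3 D : Matrix (Fin N) (Fin N) α}
    (h1 : Commute D1 D) (h2 : Commute D2 D) (h3 : Commute D3 D) :
    Commute (curlMatrix D1 D2 D3) (blockDiag3 D) := by
  refine Commute.blockMat3_blockDiag3 fun i j => ?_
  fin_cases i <;> fin_cases j <;> simp [h1, h2, h3, h1.neg_left, h2.neg_left, h3.neg_left]

end Curl

section Antidiagonal

variable {n α : Type*}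

lemma fromBlocks_antidiag_transpose_of_isSymm [AddGroup α] {X : Matrix n n α} (hX : X.IsSymm) :
    (fromBlocks 0 (-X) X 0)ᵀ = -fromBlocks 0 (-X) X 0 := by
  rw [fromBlocks_transpose, fromBlocks_neg]
  simp [hX.eq]

lemma Commute.fromBlocks_antidiag [Fintype n] [Ring α] {X Y : Matrix n n α} (h : Commute X Y) :
    Commute (fromBlocks 0 (-X) X 0) (fromBlocks 0 Y (-Y) 0) := by
  simp [Commute, SemiconjBy, fromBlocks_multiply, h.eq]

end Antidiagonal

section SkewForms

variable {n : Type*} [Fintype n] {α : Type*} [CommRing α]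

lemma dotProduct_mulVec_of_transpose_eq_neg {B : Matrix n n α} (hB : Bᵀ = -B) (v w : n → α) :
    v ⬝ᵥ B *ᵥ w = -(w ⬝ᵥ B *ᵥ v) := by
  rw [dotProduct_mulVec, ← mulVec_transpose, hB, neg_mulVec, neg_dotProduct, dotProduct_comm]

lemma sumElim_dotProduct_fromBlocks_mulVec {B : Matrix n n α} (hB : Bᵀ = -B) (a b : α)
    (x y : n → α) :
    Sum.elim (fun i => a * x i) (fun i => b * y i) ⬝ᵥ
        fromBlocks 0 B (-B) 0 *ᵥ Sum.elim (fun i => a * x i) (fun i => b * y i) =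
      2 * (a * b) * (x ⬝ᵥ B *ᵥ y) := by
  change Sum.elim (a • x) (b • y) ⬝ᵥ fromBlocks 0 B (-B) 0 *ᵥ Sum.elim (a • x) (b • y) = _
  rw [fromBlocks_mulVec, sumElim_dotProduct_sumElim]
  simp only [Sum.elim_comp_inl, Sum.elim_comp_inr, zero_mulVec, mulVec_smul, neg_mulVec, smul_zero,
    add_zero, zero_add, smul_neg, dotProduct_smul, smul_dotProduct, dotProduct_neg, smul_eq_mul]
  rw [dotProduct_mulVec_of_transpose_eq_neg hB y x]
  ring

end SkewForms

section Exponential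

variable {n : Type*} [Fintype n] [DecidableEq n]
  {𝔸 : Type*} [NormedCommRing 𝔸] [NormedAlgebra ℚ 𝔸] [CompleteSpace 𝔸]

lemma transpose_exp_mul_exp_of_transpose_eq_neg {A : Matrix n n 𝔸} (hA : Aᵀ = -A) :
    (NormedSpace.exp A)ᵀ * NormedSpace.exp A = 1 := by
  rw [← exp_transpose, hA, ← exp_add_of_commute _ _ (Commute.refl A).neg_left, neg_add_cancel,
    NormedSpace.exp_zero]

lemma dotProduct_mulVec_exp_mulVec {A M : Matrix n n 𝔸} (hA : Aᵀ = -A) (hAM : Commute A M)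
    (v : n → 𝔸) :
    NormedSpace.exp A *ᵥ v ⬝ᵥ M *ᵥ (NormedSpace.exp A *ᵥ v) = v ⬝ᵥ M *ᵥ v := by
  rw [mulVec_mulVec, ← hAM.exp_left.eq, ← mulVec_mulVec, dotProduct_mulVec,
    ← mulVec_transpose, mulVec_mulVec, transpose_exp_mul_exp_of_transpose_eq_neg hA, one_mulVec]

end Exponential

theorem discrete_momentum_conservation_general {N : ℕ} (μ ε : ℝ) (hμ : 0 < μ) (hε : 0 < ε)
    (D1 D2 D3 : Matrix (Fin N) (Fin N) ℝ)
    (h12 : D1 * D2 = D2 * D1) (h13 : D1 * D3 = D3 * D1) (h23 : D2 * D3 = D3 * D2)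
    (hD1 : D1ᵀ = -D1) (hD2 : D2ᵀ = -D2) (hD3 : D3ᵀ = -D3)
    (𝔻 : Matrix (Fin 3 × Fin N) (Fin 3 × Fin N) ℝ)
    (h𝔻 : 𝔻 = blockMat3 ![![0, -D3, D2], ![D3, 0, -D1], ![-D2, D1, 0]])
    (𝒟 : Matrix ((Fin 3 × Fin N) ⊕ (Fin 3 × Fin N)) ((Fin 3 × Fin N) ⊕ (Fin 3 × Fin N)) ℝ)
    (h𝒟 : 𝒟 = (Real.sqrt (μ * ε))⁻¹ • Matrix.fromBlocks 0 (-𝔻) 𝔻 0)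
    (H E : ℝ → (Fin 3 × Fin N → ℝ))
    (hprop : ∀ t : ℝ,
      Sum.elim (fun i => Real.sqrt μ * H t i) (fun i => Real.sqrt ε * E t i) =
        (NormedSpace.exp (t • 𝒟)).mulVec
          (Sum.elim (fun i => Real.sqrt μ * H 0 i) (fun i => Real.sqrt ε * E 0 i)))
    (B : Fin 3 → Matrix (Fin 3 × Fin N) (Fin 3 × Fin N) ℝ)
    (hB : ∀ k : Fin 3, B k = blockDiag3 (![D1, D2, D3] k)) :
    ∀ k : Fin 3, ∀ t : ℝ,
      (H t ⬝ᵥ (B k).mulVec (E t) = H 0 ⬝ᵥ (B k).mulVec (E 0)) ∧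
      (E t ⬝ᵥ (B k).mulVec (H t) = E 0 ⬝ᵥ (B k).mulVec (H 0)) := by
  intro k t
  have hBk : (B k)ᵀ = -B k := by
    rw [hB, blockDiag3_transpose, ← blockDiag3_neg]
    fin_cases k <;> simp [hD1, hD2, hD3]
  have h𝔻B : Commute 𝔻 (B k) := by
    rw [h𝔻, hB]
    fin_cases k
    exacts [Commute.curlMatrix_blockDiag3 (.refl D1) h12.symm h13.symm,
      Commute.curlMatrix_blockDiag3 h12 (.refl D2) h23.symm,
      Commute.curlMatrix_blockDiag3 h13 h23 (.refl D3)]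
  have h𝒟skew : (t • 𝒟)ᵀ = -(t • 𝒟) := by
    rw [transpose_smul, h𝒟, transpose_smul, fromBlocks_antidiag_transpose_of_isSymm
      (h𝔻 ▸ isSymm_curlMatrix hD1 hD2 hD3), smul_neg, smul_neg]
  have h𝒟M : Commute (t • 𝒟) (fromBlocks 0 (B k) (-B k) 0) := by
    rw [h𝒟, smul_smul]
    exact h𝔻B.fromBlocks_antidiag.smul_left _
  have hconserved := dotProduct_mulVec_exp_mulVec h𝒟skew h𝒟M
    (Sum.elim (fun i => Real.sqrt μ * H 0 i) (fun i => Real.sqrt ε * E 0 i))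
  rw [← hprop t, sumElim_dotProduct_fromBlocks_mulVec hBk,
    sumElim_dotProduct_fromBlocks_mulVec hBk] at hconserved
  have hH : H t ⬝ᵥ B k *ᵥ E t = H 0 ⬝ᵥ B k *ᵥ E 0 :=
    mul_left_cancel₀ (by positivity) hconserved
  refine ⟨hH, ?_⟩
  rw [dotProduct_mulVec_of_transpose_eq_neg hBk, hH, ← dotProduct_mulVec_of_transpose_eq_neg hBk]

/-- the fully discrete exponential scheme exactly conserves the discrete momenta ℳ₁ and ℳ₂: `⟨Hᵗ, B_k Eᵗ⟩` and `⟨Eᵗ, B_k Hᵗ⟩` are constant in `t` for each `k`. -/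
theorem discrete_momentum_conservation {N : ℕ} (hN : 0 < N) (μ ε : ℝ) (hμ : 0 < μ) (hε : 0 < ε)
    (D1 D2 D3 : Matrix (Fin N) (Fin N) ℝ)
    (h12 : D1 * D2 = D2 * D1) (h13 : D1 * D3 = D3 * D1) (h23 : D2 * D3 = D3 * D2)
    (hD1 : D1ᵀ = -D1) (hD2 : D2ᵀ = -D2) (hD3 : D3ᵀ = -D3)
    (𝔻 : Matrix (Fin 3 × Fin N) (Fin 3 × Fin N) ℝ)
    (h𝔻 : 𝔻 = blockMat3 ![![0, -D3, D2], ![D3, 0, -D1], ![-D2, D1, 0]])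
    (𝒟 : Matrix ((Fin 3 × Fin N) ⊕ (Fin 3 × Fin N)) ((Fin 3 × Fin N) ⊕ (Fin 3 × Fin N)) ℝ)
    (h𝒟 : 𝒟 = (Real.sqrt (μ * ε))⁻¹ • Matrix.fromBlocks 0 (-𝔻) 𝔻 0)
    (H E : ℝ → (Fin 3 × Fin N → ℝ))
    (hprop : ∀ t : ℝ,
      Sum.elim (fun i => Real.sqrt μ * H t i) (fun i => Real.sqrt ε * E t i) =
        (NormedSpace.exp (t • 𝒟)).mulVec
          (Sum.elim (fun i => Real.sqrt μ * H 0 i) (fun i => Real.sqrt ε * E 0 i)))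
    (B : Fin 3 → Matrix (Fin 3 × Fin N) (Fin 3 × Fin N) ℝ)
    (hB : ∀ k : Fin 3, B k = blockDiag3 (![D1, D2, D3] k)) :
    ∀ k : Fin 3, ∀ t : ℝ,
      (H t ⬝ᵥ (B k).mulVec (E t) = H 0 ⬝ᵥ (B k).mulVec (E 0)) ∧
      (E t ⬝ᵥ (B k).mulVec (H t) = E 0 ⬝ᵥ (B k).mulVec (H 0)) :=
  discrete_momentum_conservation_general μ ε hμ hε D1 D2 D3 h12 h13 h23 hD1 hD2 hD3 𝔻 h𝔻 𝒟 h𝒟 H E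
    hprop B hB
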